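/- arXiv:0904.4264 — 3 statements merged into one kernel-verified Lean document; each statement's English description precedes it below -/
import Mathlib

section
/- Let {α_n}_{n≥0} be a sequence of positive reals with lim_{n→∞} α_n = 0, limsup_{n→∞} |α_{n+1}^{-1} − α_n^{-1}| < ∞ and Σ_{n=0}^∞ α_n = ∞. Define γ_0 = 1 and γ_n = 1 + Σ_{i=0}^{n−1} α_i. If there exists r ∈ (1,∞) with Σ_{n=0}^∞ α_n² γ_n^{2r} < ∞, then there exists a real number s ∈ (0,1) such that Σ_{n=0}^∞ α_n^{1+s} γ_n^{r} < ∞ (in fact s = (2+r)/(2+2r) works). -/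
/-!
Put `s = (2 + r) / (2 + 2r)`. The exponents are chosen so that
`α^(1+s) γ^r = (α² γ^(2r))^s (α / γ²)^(1-s)`, and by weighted AM-GM this is at most
`α² γ^(2r) + α / γ²`. The first series converges by hypothesis; the second is dominated by the
telescoping series `∑ (1/γₙ - 1/γₙ₊₁)`, since `γₙ₊₁ = γₙ + αₙ ≤ 2γₙ` once `αₙ ≤ 1 ≤ γₙ`.
-/

open Filter

section CumulativeSum

variable {a g : ℕ → ℝ}

lemma pos_of_succ_eq_add (ha : ∀ n, 0 ≤ a n) (hg0 : 0 < g 0) (hg : ∀ n, g (n + 1) = g n + a n)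
    (n : ℕ) : 0 < g n := by
  induction n with
  | zero => exact hg0
  | succ n ih => rw [hg]; linarith [ha n]

lemma summable_inv_sub_inv_succ (ha : ∀ n, 0 ≤ a n) (hg0 : 0 < g 0)
    (hg : ∀ n, g (n + 1) = g n + a n) : Summable fun n => (g n)⁻¹ - (g (n + 1))⁻¹ := by
  have hpos := pos_of_succ_eq_add ha hg0 hg
  refine summable_of_sum_range_le (c := (g 0)⁻¹) (fun n => ?_) (fun n => ?_)
  · exact sub_nonneg.2 (inv_anti₀ (hpos n) (by rw [hg]; linarith [ha n]))
  · rw [Finset.sum_range_sub']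
    linarith [inv_pos.2 (hpos n)]

lemma summable_div_sq_of_eventually_le (ha : ∀ n, 0 ≤ a n) (hg0 : 0 < g 0)
    (hg : ∀ n, g (n + 1) = g n + a n) (hle : ∀ᶠ n in atTop, a n ≤ g n) :
    Summable fun n => a n / g n ^ 2 := by
  have hpos := pos_of_succ_eq_add ha hg0 hg
  refine summable_of_isBigO_nat (summable_inv_sub_inv_succ ha hg0 hg) ?_
  refine Asymptotics.IsBigO.of_bound 2 ?_
  filter_upwards [hle] with n hn
  have hgn := hpos n
  have hgn1 := hpos (n + 1)
  have hdiff : (g n)⁻¹ - (g (n + 1))⁻¹ = a n / (g n * g (n + 1)) := by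
    rw [inv_sub_inv hgn.ne' hgn1.ne', hg]
    ring
  rw [Real.norm_of_nonneg (by have := ha n; positivity), hdiff,
    Real.norm_of_nonneg (by have := ha n; positivity), ← mul_div_assoc,
    div_le_div_iff₀ (by positivity) (by positivity)]
  -- `g (n + 1) ≤ 2 g n`
  have : g n * g (n + 1) ≤ 2 * g n ^ 2 := by rw [hg]; nlinarith
  nlinarith [ha n]

end CumulativeSum

lemma rpow_one_add_mul_rpow_eq {x y r : ℝ} (hx : 0 < x) (hy : 0 < y) (hr : 0 < r) :
    x ^ (1 + (2 + r) / (2 + 2 * r)) * y ^ r =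
      (x ^ 2 * y ^ (2 * r)) ^ ((2 + r) / (2 + 2 * r)) *
        (x / y ^ 2) ^ (1 - (2 + r) / (2 + 2 * r)) := by
  set s := (2 + r) / (2 + 2 * r) with hs
  rw [Real.mul_rpow (by positivity) (by positivity), Real.div_rpow hx.le (by positivity),
    ← Real.rpow_natCast x 2, ← Real.rpow_natCast y 2, ← Real.rpow_mul hx.le,
    ← Real.rpow_mul hy.le, ← Real.rpow_mul hy.le, div_eq_mul_inv, ← Real.rpow_neg hy.le,
    mul_mul_mul_comm, ← Real.rpow_add hx, ← Real.rpow_add hy]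
  congr 2
  · push_cast; ring
  · rw [hs]; push_cast; field_simp; ring

lemma rpow_mul_rpow_le_add {p q s : ℝ} (hp : 0 ≤ p) (hq : 0 ≤ q) (hs0 : 0 ≤ s) (hs1 : s ≤ 1) :
    p ^ s * q ^ (1 - s) ≤ p + q := by
  have := Real.geom_mean_le_arith_mean2_weighted hs0 (sub_nonneg.2 hs1) hp hq (by ring)
  nlinarith

theorem stmt0_general (α : ℕ → ℝ) (hpos : ∀ n, 0 < α n)
    (hlim : Tendsto α atTop (nhds 0))
    (γ : ℕ → ℝ) (hγ : ∀ n, γ n = 1 + ∑ i ∈ Finset.range n, α i)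
    (r : ℝ) (hr : 1 < r)
    (hsum : Summable (fun n => (α n) ^ 2 * (γ n) ^ (2 * r))) :
    ∃ s : ℝ, 0 < s ∧ s < 1 ∧
      Summable (fun n => (α n) ^ (1 + s) * (γ n) ^ r) := by
  have hα := fun n => (hpos n).le
  have hγ0 : 0 < γ 0 := by simp [hγ]
  have hγsucc : ∀ n, γ (n + 1) = γ n + α n := fun n => by
    rw [hγ, hγ, Finset.sum_range_succ]; ring
  have hγpos := pos_of_succ_eq_add hα hγ0 hγsucc
  have hαγ : ∀ᶠ n in atTop, α n ≤ γ n := by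
    filter_upwards [hlim.eventually (gt_mem_nhds one_pos)] with n hn
    rw [hγ]
    linarith [Finset.sum_nonneg fun i (_ : i ∈ Finset.range n) => hα i]
  have hden : 0 < 2 + 2 * r := by linarith
  have hs0 : 0 < (2 + r) / (2 + 2 * r) := div_pos (by linarith) hden
  have hs1 : (2 + r) / (2 + 2 * r) < 1 := (div_lt_one hden).2 (by linarith)
  refine ⟨_, hs0, hs1, .of_nonneg_of_le (fun n => ?_) (fun n => ?_)
    (hsum.add (summable_div_sq_of_eventually_le hα hγ0 hγsucc hαγ))⟩
  all_goals have hx := hpos n; have hy := hγpos n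
  · positivity
  rw [rpow_one_add_mul_rpow_eq hx hy (by linarith)]
  exact rpow_mul_rpow_le_add (by positivity) (by positivity) hs0.le hs1.le

theorem stmt0 (α : ℕ → ℝ) (hpos : ∀ n, 0 < α n)
    (hlim : Tendsto α atTop (nhds 0))
    (hbdd : ∃ C : ℝ, ∀ᶠ n in atTop, |(α (n + 1))⁻¹ - (α n)⁻¹| ≤ C)
    (hdiv : ¬ Summable α)
    (γ : ℕ → ℝ) (hγ : ∀ n, γ n = 1 + ∑ i ∈ Finset.range n, α i)
    (r : ℝ) (hr : 1 < r)
    (hsum : Summable (fun n => (α n) ^ 2 * (γ n) ^ (2 * r))) :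
    ∃ s : ℝ, 0 < s ∧ s < 1 ∧
      Summable (fun n => (α n) ^ (1 + s) * (γ n) ^ r) :=
  stmt0_general α hpos hlim γ hγ r hr hsum
end

section
/- Let (E, ‖·‖) be a normed space, S ⊆ E, ε ∈ (0,1), C ≥ 1, L ≥ 0, and let θ', θ'' be two parameters. Suppose {G^{i:n}} are iterated maps (for parameter θ') satisfying ‖G^{i:n}(x) − G^{i:n}(y)‖ ≤ C ε^{n−i} ‖x − y‖ for all x, y ∈ S and m ≤ i ≤ n, and suppose the one-step maps at the two parameters satisfy ‖G'_{i}(x) − G''_{i}(x)‖ ≤ L for all x ∈ S and all i (where L plays the role of a bound of the form (Lipschitz constant in θ) · ‖θ' − θ''‖). Let F', F'' denote the full compositions from index m to n at parameters θ', θ'' respectively, both mapping S into S. Then ‖F'(x) − F''(x)‖ ≤ C L Σ_{i=m}^{n−1} ε^{n−i−1} ≤ C L / (1 − ε) for all x ∈ S. -/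
/-!
Write `F' = comp' m n` and `F'' = comp'' m n`. The points `H i = comp' i n (comp'' m i x)`
interpolate between `H m = F' x` and `H n = F'' x`, and consecutive ones differ only in one
step: `H i` and `H (i + 1)` are the images under the tail `comp' (i + 1) n` of `G' (i + 1) y`
and `G'' (i + 1) y` with `y = comp'' m i x`. The contraction of the tail turns the one-step
discrepancy `L` into `C ε ^ (n - i - 1) L`, and the triangle inequality along `H` sums these to
a geometric series bounded by `C L / (1 - ε)`, uniformly in `n`.
-/

open Finset

/-- `comp m n` is the composition `G n ∘ ⋯ ∘ G (m + 1)`. -/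
structure IsForwardComp {α : Type*} (G : ℕ → α → α) (comp : ℕ → ℕ → α → α) : Prop where
  apply_self : ∀ m x, comp m m x = x
  apply_succ : ∀ m n x, m ≤ n → comp m (n + 1) x = G (n + 1) (comp m n x)

namespace IsForwardComp

variable {α : Type*} {G : ℕ → α → α} {comp : ℕ → ℕ → α → α}

theorem apply_eq_apply_succ_left (h : IsForwardComp G comp) {i k : ℕ} (hik : i < k) (x : α) :
    comp i k x = comp (i + 1) k (G (i + 1) x) := by
  induction k, hik using Nat.le_induction with
  | base => rw [h.apply_succ i i x le_rfl, h.apply_self, h.apply_self]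
  | succ k hik ih =>
    rw [h.apply_succ i k x (Nat.le_of_succ_le hik), ih, ← h.apply_succ (i + 1) k _ hik]

theorem mapsTo (h : IsForwardComp G comp) {S : Set α} (hG : ∀ k, Set.MapsTo (G k) S S)
    {m i : ℕ} (hmi : m ≤ i) : Set.MapsTo (comp m i) S S := by
  induction i, hmi using Nat.le_induction with
  | base => intro x hx; rwa [h.apply_self]
  | succ i hmi ih => intro x hx; rw [h.apply_succ m i x hmi]; exact hG _ (ih hx)

theorem dist_le_sum_mul [PseudoMetricSpace α] {G' G'' : ℕ → α → α} {comp' comp'' : ℕ → ℕ → α → α}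
    (h' : IsForwardComp G' comp') (h'' : IsForwardComp G'' comp'') {S : Set α}
    (hG' : ∀ k, Set.MapsTo (G' k) S S) (hG'' : ∀ k, Set.MapsTo (G'' k) S S)
    {m n : ℕ} (hmn : m ≤ n) {K : ℕ → ℝ} {L : ℝ} (hK : ∀ i, 0 ≤ K i)
    (hcontr : ∀ i, m < i → i ≤ n → ∀ x ∈ S, ∀ y ∈ S,
      dist (comp' i n x) (comp' i n y) ≤ K i * dist x y)
    (hdisc : ∀ i, ∀ x ∈ S, dist (G' i x) (G'' i x) ≤ L) {x : α} (hx : x ∈ S) :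
    dist (comp' m n x) (comp'' m n x) ≤ ∑ i ∈ Ico m n, K (i + 1) * L := by
  set H : ℕ → α := fun i => comp' i n (comp'' m i x)
  have hHm : H m = comp' m n x := by simp only [H, h''.apply_self]
  have hHn : H n = comp'' m n x := by simp only [H, h'.apply_self]
  have hstep : ∀ i ∈ Ico m n, dist (H i) (H (i + 1)) ≤ K (i + 1) * L := by
    intro i hi
    obtain ⟨hmi, hin⟩ := Finset.mem_Ico.mp hi
    have hy : comp'' m i x ∈ S := h''.mapsTo hG'' hmi hx
    calc dist (H i) (H (i + 1))
        = dist (comp' (i + 1) n (G' (i + 1) (comp'' m i x)))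
            (comp' (i + 1) n (G'' (i + 1) (comp'' m i x))) := by
          simp only [H, h'.apply_eq_apply_succ_left hin, h''.apply_succ m i x hmi]
      _ ≤ K (i + 1) * dist (G' (i + 1) (comp'' m i x)) (G'' (i + 1) (comp'' m i x)) :=
          hcontr _ (Nat.lt_succ_of_le hmi) hin _ (hG' _ hy) _ (hG'' _ hy)
      _ ≤ K (i + 1) * L := mul_le_mul_of_nonneg_left (hdisc _ _ hy) (hK _)
  rw [← hHm, ← hHn]
  exact (dist_le_Ico_sum_dist H hmn).trans (sum_le_sum hstep)

end IsForwardComp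

theorem sum_Ico_pow_sub_sub_one_le {ε : ℝ} (hε0 : 0 ≤ ε) (hε1 : ε < 1) (m n : ℕ) :
    ∑ i ∈ Ico m n, ε ^ (n - i - 1) ≤ 1 / (1 - ε) := by
  calc ∑ i ∈ Ico m n, ε ^ (n - i - 1)
      = ∑ k ∈ range (n - m), ε ^ (n - m - 1 - k) := by
        rw [sum_Ico_eq_sum_range]
        exact sum_congr rfl fun k _ => by congr 1; omega
    _ = ∑ k ∈ Ico 0 (n - m), ε ^ k := by rw [sum_range_reflect, range_eq_Ico]
    _ ≤ ε ^ 0 / (1 - ε) := geom_sum_Ico_le_of_lt_one hε0 hε1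
    _ = 1 / (1 - ε) := by rw [pow_zero]

theorem stmt10 {E : Type*} [NormedAddCommGroup E] [NormedSpace ℝ E]
    (S : Set E) (ε : ℝ) (hε0 : 0 < ε) (hε1 : ε < 1)
    (C L : ℝ) (hC : 1 ≤ C) (hL : 0 ≤ L)
    (G' G'' : ℕ → E → E) (comp' comp'' : ℕ → ℕ → E → E)
    (hrec'0 : ∀ m x, comp' m m x = x)
    (hrec'S : ∀ m n x, m ≤ n → comp' m (n + 1) x = G' (n + 1) (comp' m n x))
    (hrec''0 : ∀ m x, comp'' m m x = x)
    (hrec''S : ∀ m n x, m ≤ n → comp'' m (n + 1) x = G'' (n + 1) (comp'' m n x))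
    (hmaps' : ∀ k, ∀ x ∈ S, G' k x ∈ S)
    (hmaps'' : ∀ k, ∀ x ∈ S, G'' k x ∈ S)
    (m n : ℕ) (hmn : m ≤ n)
    (hcontr : ∀ i, m ≤ i → i ≤ n → ∀ x ∈ S, ∀ y ∈ S,
      ‖comp' i n x - comp' i n y‖ ≤ C * ε ^ (n - i) * ‖x - y‖)
    (hdisc : ∀ i, ∀ x ∈ S, ‖G' i x - G'' i x‖ ≤ L) :
    ∀ x ∈ S,
      ‖comp' m n x - comp'' m n x‖ ≤
          C * L * ∑ i ∈ Finset.Ico m n, ε ^ (n - i - 1) ∧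
        ‖comp' m n x - comp'' m n x‖ ≤ C * L / (1 - ε) := by
  intro x hx
  have hbound : ‖comp' m n x - comp'' m n x‖ ≤ C * L * ∑ i ∈ Ico m n, ε ^ (n - i - 1) := by
    have h := IsForwardComp.dist_le_sum_mul ⟨hrec'0, hrec'S⟩ ⟨hrec''0, hrec''S⟩ hmaps' hmaps''
      hmn (K := fun i => C * ε ^ (n - i)) (fun i => by positivity)
      (fun i hmi hin => by simpa only [dist_eq_norm] using hcontr i hmi.le hin)
      (by simpa only [dist_eq_norm] using hdisc) hx
    rw [dist_eq_norm] at h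
    refine h.trans_eq ?_
    rw [mul_sum]
    exact sum_congr rfl fun i _ => by rw [Nat.sub_sub]; ring
  refine ⟨hbound, hbound.trans ?_⟩
  calc C * L * ∑ i ∈ Ico m n, ε ^ (n - i - 1)
      ≤ C * L * (1 / (1 - ε)) := by
        gcongr
        exact sum_Ico_pow_sub_sub_one_le hε0.le hε1 m n
    _ = C * L / (1 - ε) := by ring
end

section
/- Let f : ℝ^d → ℝ be C¹ with ∇f Lipschitz with constant C and ‖∇f(θ)‖ ≤ C on a compact set Q. Let {α_n}_{n≥0} be positive reals with Σ α_n = ∞, let {ξ_n} be in ℝ^d, and let θ_{n+1} = θ_n + α_n(∇f(θ_n) + ξ_n). Assume (a) θ_n ∈ Q for all n; (b) Σ_{n=0}^∞ α_n ‖∇f(θ_n)‖² < ∞; (c) sup_{k≥n} ‖Σ_{i=n}^{k} α_i ξ_i‖ → 0 as n → ∞. Then lim_{n→∞} ∇f(θ_n) = 0. -/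
/-!
Write `g n = ‖∇f(θ n)‖`. Since `∑ α n = ∞` while `∑ α n g n ² < ∞`, `g` drops below every
`ε > 0` infinitely often. If `g` also climbed above `2ε` infinitely often, then late enough there
would be stretches `[n, m)` on which `g` goes from `≥ 2ε` down to `< ε` while staying `≥ ε`.
On such a stretch `ε² ∑ α i ≤ ∑ α i g i ²` is a tail of a convergent series, so `∑ α i → 0`;
but the Lipschitz bound gives `ε ≤ g n - g m ≤ C² ∑ α i + C ‖∑ α i ξ i‖`, and both terms on the
right tend to `0`.
-/

open Filter Finset Topology

theorem Summable.eventually_forall_sum_Ico_mem {G : Type*} [AddCommGroup G] [TopologicalSpace G]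
    [IsTopologicalAddGroup G] {f : ℕ → G} (hf : Summable f) {e : Set G} (he : e ∈ 𝓝 0) :
    ∀ᶠ n in atTop, ∀ m, ∑ i ∈ Ico n m, f i ∈ e := by
  obtain ⟨s, hs⟩ := hf.vanishing he
  have hs_lt : ∀ᶠ n in atTop, ∀ j ∈ s, j < n :=
    (eventually_all_finset s).2 fun j _ => eventually_gt_atTop j
  filter_upwards [hs_lt] with n hn m
  exact hs _ (disjoint_left.2 fun i hi his => (mem_Ico.1 hi).1.not_gt (hn i his))

theorem frequently_lt_of_summable_mul_of_not_summable {a b : ℕ → ℝ} (ha : ∀ n, 0 ≤ a n)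
    (hdiv : ¬ Summable a) (hab : Summable fun n => a n * b n) {ε : ℝ} (hε : 0 < ε) :
    ∃ᶠ n in atTop, b n < ε := by
  by_contra! h
  refine hdiv ((hab.mul_left ε⁻¹).of_norm_bounded_eventually_nat (h.mono fun n hn => ?_))
  calc ‖a n‖ = ε⁻¹ * (a n * ε) := by
        rw [Real.norm_of_nonneg (ha n)]; field_simp
    _ ≤ ε⁻¹ * (a n * b n) := by gcongr; exact ha n

theorem exists_gt_forall_mem_Ico_not {p : ℕ → Prop} {n : ℕ} (hn : ¬ p n)
    (h : ∃ m, n ≤ m ∧ p m) : ∃ m, n < m ∧ p m ∧ ∀ i ∈ Ico n m, ¬ p i := by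
  classical
  obtain ⟨hle, hp⟩ := Nat.find_spec h
  refine ⟨Nat.find h, hle.lt_of_ne fun heq => hn (heq ▸ hp), hp, fun i hi hpi => ?_⟩
  exact Nat.find_min h (mem_Ico.1 hi).2 ⟨(mem_Ico.1 hi).1, hpi⟩

theorem tendsto_zero_of_summable_mul_norm_sq {E : Type*} [SeminormedAddCommGroup E]
    {G : ℕ → E} {a : ℕ → ℝ} {K : ℝ} (hK : 0 < K) (ha : ∀ n, 0 ≤ a n) (hdiv : ¬ Summable a)
    (hsum : Summable fun n => a n * ‖G n‖ ^ 2)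
    (hinc : ∀ δ > 0, ∀ᶠ n in atTop, ∀ m ≥ n, ‖G m - G n‖ ≤ K * ∑ i ∈ Ico n m, a i + δ) :
    Tendsto G atTop (𝓝 0) := by
  refine Metric.tendsto_nhds.2 fun r hr => ?_
  obtain ⟨ε, hε, rfl⟩ : ∃ ε, 0 < ε ∧ r = 2 * ε := ⟨r / 2, half_pos hr, by ring⟩
  have hfreq : ∃ᶠ n in atTop, ‖G n‖ < ε :=
    (frequently_lt_of_summable_mul_of_not_summable ha hdiv hsum (pow_pos hε 2)).mono
      fun n hn => (pow_lt_pow_iff_left₀ (norm_nonneg _) hε.le two_ne_zero).1 hn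
  have htail := hsum.eventually_forall_sum_Ico_mem (Iio_mem_nhds (show 0 < ε ^ 3 / (2 * K) by
    positivity))
  filter_upwards [hinc (ε / 2) (half_pos hε), htail] with n hinc_n htail_n
  rw [dist_zero_right]
  by_contra! hn
  obtain ⟨m, hnm, hm, hwindow⟩ :=
    exists_gt_forall_mem_Ico_not (p := fun i => ‖G i‖ < ε) (by linarith)
      (frequently_atTop.1 hfreq n)
  have hweight : ∑ i ∈ Ico n m, a i < ε / (2 * K) := by
    refine lt_of_mul_lt_mul_left (?_ : ε ^ 2 * _ < ε ^ 2 * _) (by positivity)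
    calc ε ^ 2 * ∑ i ∈ Ico n m, a i ≤ ∑ i ∈ Ico n m, a i * ‖G i‖ ^ 2 := by
          rw [mul_sum]
          refine sum_le_sum fun i hi => ?_
          rw [mul_comm]
          gcongr
          · exact ha i
          · exact not_lt.1 (hwindow i hi)
      _ < ε ^ 3 / (2 * K) := htail_n m
      _ = ε ^ 2 * (ε / (2 * K)) := by ring
  have hdrift : K * ∑ i ∈ Ico n m, a i < ε / 2 :=
    calc K * ∑ i ∈ Ico n m, a i < K * (ε / (2 * K)) := by gcongr
      _ = ε / 2 := by field_simp
  have hdrop : ‖G n‖ - ‖G m‖ ≤ ‖G m - G n‖ := norm_sub_rev (G n) (G m) ▸ norm_sub_norm_le _ _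
  linarith [hinc_n m hnm.le]

theorem norm_sub_le_of_eq_add_smul {E : Type*} [SeminormedAddCommGroup E] [NormedSpace ℝ E]
    {x v w : ℕ → E} {a : ℕ → ℝ} {C : ℝ} (hrec : ∀ k, x (k + 1) = x k + a k • (v k + w k))
    (ha : ∀ k, 0 ≤ a k) (hv : ∀ k, ‖v k‖ ≤ C) {n m : ℕ} (hnm : n ≤ m) :
    ‖x m - x n‖ ≤ C * ∑ i ∈ Ico n m, a i + ‖∑ i ∈ Ico n m, a i • w i‖ := by
  have htele : x m - x n = ∑ i ∈ Ico n m, a i • v i + ∑ i ∈ Ico n m, a i • w i := by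
    rw [← sum_add_distrib, ← sum_Ico_sub x hnm]
    refine sum_congr rfl fun k _ => ?_
    rw [hrec k, smul_add]
    abel
  rw [htele, mul_sum]
  refine (norm_add_le _ _).trans (add_le_add_left (norm_sum_le_of_le _ fun i _ => ?_) _)
  rw [norm_smul, Real.norm_of_nonneg (ha i), mul_comm]
  exact mul_le_mul_of_nonneg_right (hv i) (ha i)

theorem stmt13_general (d : ℕ)
    (f : EuclideanSpace ℝ (Fin d) → ℝ)
    (Q : Set (EuclideanSpace ℝ (Fin d)))
    (C : ℝ) (hC : 0 < C)
    (hlip : ∀ x ∈ Q, ∀ y ∈ Q, ‖gradient f x - gradient f y‖ ≤ C * ‖x - y‖)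
    (hbd : ∀ x ∈ Q, ‖gradient f x‖ ≤ C)
    (α : ℕ → ℝ) (hα : ∀ n, 0 < α n) (hdiv : ¬ Summable α)
    (ξ θ : ℕ → EuclideanSpace ℝ (Fin d))
    (hrec : ∀ n, θ (n + 1) = θ n + α n • (gradient f (θ n) + ξ n))
    (ha : ∀ n, θ n ∈ Q)
    (hb : Summable (fun n => α n * ‖gradient f (θ n)‖ ^ 2))
    (hc : ∀ ε > 0, ∃ N, ∀ n ≥ N, ∀ k ≥ n,
      ‖∑ i ∈ Finset.Icc n k, α i • ξ i‖ < ε) :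
    Tendsto (fun n => gradient f (θ n)) atTop (nhds 0) := by
  have hα0 : ∀ n, 0 ≤ α n := fun n => (hα n).le
  refine tendsto_zero_of_summable_mul_norm_sq (pow_pos hC 2) hα0 hdiv hb fun δ hδ => ?_
  obtain ⟨N, hN⟩ := hc (δ / C) (div_pos hδ hC)
  filter_upwards [eventually_ge_atTop N] with n hn m hnm
  have hnoise : ‖∑ i ∈ Ico n m, α i • ξ i‖ ≤ δ / C := by
    rcases hnm.eq_or_lt with rfl | hlt
    · simpa using (div_pos hδ hC).le
    · obtain ⟨k, rfl⟩ : ∃ k, m = k + 1 := ⟨m - 1, by omega⟩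
      rw [Ico_add_one_right_eq_Icc]
      exact (hN n hn k (by omega)).le
  calc ‖gradient f (θ m) - gradient f (θ n)‖ ≤ C * ‖θ m - θ n‖ := hlip _ (ha m) _ (ha n)
    _ ≤ C * (C * ∑ i ∈ Ico n m, α i + δ / C) := by
        gcongr
        exact (norm_sub_le_of_eq_add_smul hrec hα0 (fun k => hbd _ (ha k)) hnm).trans
          (by gcongr)
    _ = C ^ 2 * ∑ i ∈ Ico n m, α i + δ := by field_simp

theorem stmt13 (d : ℕ)
    (f : EuclideanSpace ℝ (Fin d) → ℝ) (hf : ContDiff ℝ 1 f)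
    (Q : Set (EuclideanSpace ℝ (Fin d))) (hQcompact : IsCompact Q)
    (C : ℝ) (hC : 0 < C)
    (hlip : ∀ x ∈ Q, ∀ y ∈ Q, ‖gradient f x - gradient f y‖ ≤ C * ‖x - y‖)
    (hbd : ∀ x ∈ Q, ‖gradient f x‖ ≤ C)
    (α : ℕ → ℝ) (hα : ∀ n, 0 < α n) (hdiv : ¬ Summable α)
    (ξ θ : ℕ → EuclideanSpace ℝ (Fin d))
    (hrec : ∀ n, θ (n + 1) = θ n + α n • (gradient f (θ n) + ξ n))
    (ha : ∀ n, θ n ∈ Q)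
    (hb : Summable (fun n => α n * ‖gradient f (θ n)‖ ^ 2))
    (hc : ∀ ε > 0, ∃ N, ∀ n ≥ N, ∀ k ≥ n,
      ‖∑ i ∈ Finset.Icc n k, α i • ξ i‖ < ε) :
    Tendsto (fun n => gradient f (θ n)) atTop (nhds 0) :=
  stmt13_general d f Q C hC hlip hbd α hα hdiv ξ θ hrec ha hb hc
end
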